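/- (Theorem 3.2 (iii), ambient-metric version) Assume G is conserved by X, and let φ : ℝ → E → E be a flow of the geometrically dissipated system, i.e. φ(0, x) = x and φ(s + t, x) = φ(s, φ(t, x)) for all s, t ∈ ℝ and x ∈ E, and for every x ∈ E the curve t ↦ φ(t, x) is continuous in (t,x) and differentiable in t with derivative X(φ(t,x)) − v₀(φ(t,x)). Let x₀ ∈ E and suppose the forward orbit {φ(t, x₀) : t ≥ 0} is bounded. Then the ω-limit set ω(x₀) := {z ∈ E : there exist t₁ < t₂ < ⋯ → +∞ with φ(tₙ, x₀) → z} is nonempty and compact, and the distance (induced by the norm of E) from φ(t, x₀) to the set Inv tends to 0 as t → +∞. -/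

import Mathlib

open scoped RealInnerProductSpace BigOperators
open Filter Topology

/-- `Σ^{(a₁,…,a_r)}_{(b₁,…,b_s)}`: the `r × s` real matrix whose `(i,j)` entry is `⟪b j, a i⟫`. -/
noncomputable def sigmaMat {E : Type*} [NormedAddCommGroup E] [InnerProductSpace ℝ E]
    {r s : ℕ} (a : Fin r → E) (b : Fin s → E) : Matrix (Fin r) (Fin s) ℝ :=
  Matrix.of fun i j => ⟪b j, a i⟫

/-- The standard control vector `v₀(w₁,…,w_{k+1},u)`: there are `k+1` vectors `w`
(`k+1 ≥ 1` encodes the requirement that the number of `w`-vectors is at least one).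
With `0`-indexing, the sign `(-1)^(i+k+1)` below is the paper's `(-1)^{i+k+1}` for
`1`-indexed `i` and `k+1` vectors. -/
noncomputable def stdControl {E : Type*} [NormedAddCommGroup E] [InnerProductSpace ℝ E]
    {k : ℕ} (w : Fin (k + 1) → E) (u : E) : E :=
  (∑ i : Fin (k + 1),
      ((-1 : ℝ) ^ ((i : ℕ) + k + 1) *
        (sigmaMat w (Fin.snoc (w ∘ i.succAbove) u)).det) • w i) +
    (sigmaMat w w).det • u

/-- The family of gradients `(∇F₁(x),…,∇F_{k+1}(x),∇G(x))`. -/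
noncomputable def gradFam {E : Type*} [NormedAddCommGroup E] [InnerProductSpace ℝ E]
    [FiniteDimensional ℝ E] {k : ℕ} (F : Fin (k + 1) → E → ℝ) (G : E → ℝ) (x : E) :
    Fin (k + 1 + 1) → E :=
  Fin.snoc (fun i => gradient (F i) x) (gradient G x)

/-- The standard control vector field `x ↦ v₀(∇F₁(x),…,∇F_{k+1}(x),∇G(x))`. -/
noncomputable def v0Field {E : Type*} [NormedAddCommGroup E] [InnerProductSpace ℝ E]
    [FiniteDimensional ℝ E] {k : ℕ} (F : Fin (k + 1) → E → ℝ) (G : E → ℝ) (x : E) : E :=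
  stdControl (fun i => gradient (F i) x) (gradient G x)

/-- `det Σ^{(∇F₁(x),…,∇F_{k+1}(x),∇G(x))}_{(∇F₁(x),…,∇F_{k+1}(x),∇G(x))}`. -/
noncomputable def gramDetFG {E : Type*} [NormedAddCommGroup E] [InnerProductSpace ℝ E]
    [FiniteDimensional ℝ E] {k : ℕ} (F : Fin (k + 1) → E → ℝ) (G : E → ℝ) (x : E) : ℝ :=
  (sigmaMat (gradFam F G x) (gradFam F G x)).det

/-- The set `Inv = {x | det Σ^{(∇F(x),∇G(x))}_{(∇F(x),∇G(x))} = 0}`. -/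
def invSet {E : Type*} [NormedAddCommGroup E] [InnerProductSpace ℝ E]
    [FiniteDimensional ℝ E] {k : ℕ} (F : Fin (k + 1) → E → ℝ) (G : E → ℝ) : Set E :=
  {x | gramDetFG F G x = 0}

/-!
Along solutions of the dissipated system, `d/dt G = ⟪∇G, X - v₀⟫ = -⟪∇G, v₀⟫`, and `⟪∇G, v₀⟫`
is the Laplace expansion of the Gram determinant of `(∇F₁, …, ∇F_k, ∇G)` along its last row.
Gram determinants are nonnegative, so `G` is a Lyapunov function whose derivative vanishes
exactly on `Inv`. A bounded forward orbit has a nonempty compact ω-limit set which attracts it,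
and LaSalle's invariance principle places that set inside `Inv`.
-/

open Set Metric

section ControlVector

variable {E : Type*} [NormedAddCommGroup E] [InnerProductSpace ℝ E]

lemma sigmaMat_self_eq_gram {n : ℕ} (b : Fin n → E) : sigmaMat b b = Matrix.gram ℝ b := by
  ext i j
  simp [sigmaMat, real_inner_comm]

lemma det_sigmaMat_self_nonneg {n : ℕ} (b : Fin n → E) : 0 ≤ (sigmaMat b b).det := by
  rw [sigmaMat_self_eq_gram]
  exact (Matrix.posSemidef_gram ℝ b).det_nonneg

lemma Fin.snoc_comp_castSucc_succAbove {α : Type*} {k : ℕ} (w : Fin (k + 1) → α) (u : α)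
    (i : Fin (k + 1)) :
    (Fin.snoc w u : Fin (k + 2) → α) ∘ (Fin.castSucc i).succAbove =
      Fin.snoc (w ∘ i.succAbove) u := by
  funext c
  refine Fin.lastCases ?_ (fun c => ?_) c
  · rw [Function.comp_apply, Fin.succAbove_of_le_castSucc _ _ (by simp [Fin.le_last]),
      Fin.succ_last, Fin.snoc_last, Fin.snoc_last]
  · rw [Function.comp_apply, Fin.castSucc_succAbove_castSucc, Fin.snoc_castSucc,
      Fin.snoc_castSucc, Function.comp_apply]

/-- `v₀` is built so that this is the Laplace expansion of the Gram determinant along the row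
of `u`. -/
lemma inner_stdControl {k : ℕ} (w : Fin (k + 1) → E) (u : E) :
    ⟪u, stdControl w u⟫ = (sigmaMat (Fin.snoc w u) (Fin.snoc w u)).det := by
  rw [Matrix.det_succ_row _ (Fin.last (k + 1)), Fin.sum_univ_castSucc, stdControl,
    inner_add_right, inner_sum, real_inner_smul_right]
  congr 1
  · refine Finset.sum_congr rfl fun i _ => ?_
    have hminor : (sigmaMat (Fin.snoc w u) (Fin.snoc w u)).submatrix
        (Fin.last (k + 1)).succAbove (Fin.castSucc i).succAbove
          = sigmaMat w (Fin.snoc (w ∘ i.succAbove) u) := by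
      rw [← Fin.snoc_comp_castSucc_succAbove]
      ext r c
      simp [sigmaMat]
    have hsign : ((Fin.last (k + 1) : Fin (k + 2)) : ℕ) + (Fin.castSucc i : ℕ) = i + k + 1 := by
      simp only [Fin.val_last, Fin.val_castSucc]
      omega
    rw [hminor, hsign, real_inner_smul_right]
    simp only [sigmaMat, Matrix.of_apply, Fin.snoc_castSucc, Fin.snoc_last, real_inner_comm u]
    ring
  · have hminor : (sigmaMat (Fin.snoc w u) (Fin.snoc w u)).submatrix
        (Fin.last (k + 1)).succAbove (Fin.last (k + 1)).succAbove = sigmaMat w w := by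
      ext r c
      simp [sigmaMat]
    rw [hminor, ← two_mul, pow_mul, neg_one_sq, one_pow]
    simp [sigmaMat, mul_comm]

variable [FiniteDimensional ℝ E] {k : ℕ} (F : Fin (k + 1) → E → ℝ) (G : E → ℝ)

lemma gramDetFG_nonneg (x : E) : 0 ≤ gramDetFG F G x :=
  det_sigmaMat_self_nonneg _

lemma inner_gradient_v0Field (x : E) : ⟪gradient G x, v0Field F G x⟫ = gramDetFG F G x :=
  inner_stdControl _ _

lemma hasDerivAt_comp_of_hasDerivAt_sub_v0Field {X : E → E} (hG : Differentiable ℝ G)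
    (hcons : ∀ y : E, ⟪gradient G y, X y⟫ = 0) {γ : ℝ → E} {t : ℝ}
    (hγ : HasDerivAt γ (X (γ t) - v0Field F G (γ t)) t) :
    HasDerivAt (fun τ => G (γ τ)) (-gramDetFG F G (γ t)) t := by
  refine ((hG (γ t)).hasGradientAt.hasFDerivAt.comp_hasDerivAt t hγ).congr_deriv ?_
  rw [InnerProductSpace.toDual_apply_apply, inner_sub_right, hcons, inner_gradient_v0Field,
    zero_sub]

end ControlVector

section OmegaLimit

lemma exists_strictMono_tendsto_iff_mapClusterPt {ι X : Type*} [LinearOrder ι] [NoMaxOrder ι]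
    [IsCountablyGenerated (atTop : Filter ι)] [TopologicalSpace X] [FirstCountableTopology X]
    {γ : ι → X} {z : X} :
    (∃ t : ℕ → ι, StrictMono t ∧ Tendsto t atTop atTop ∧ Tendsto (fun n => γ (t n)) atTop (𝓝 z))
      ↔ MapClusterPt z atTop γ := by
  constructor
  · rintro ⟨t, -, ht, hγt⟩
    exact hγt.mapClusterPt.of_comp ht
  · intro hz
    obtain ⟨ψ, hγψ, hψ⟩ := hz.exists_seq_tendsto
    obtain ⟨θ, hθ, hψθ⟩ := strictMono_subseq_of_tendsto_atTop hψ
    exact ⟨ψ ∘ θ, hψθ, hψ.comp hθ.tendsto_atTop, hγψ.comp hθ.tendsto_atTop⟩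

variable {τ α β : Type*} (f : Filter τ) (ϕ : τ → α → β)

lemma exists_closure_image2_subset_of_eventually_mapsTo [TopologicalSpace β] {s : Set α}
    {c : Set β} (hc : IsClosed c) (hcs : ∀ᶠ t in f, MapsTo (ϕ t) s c) :
    ∃ u ∈ f, closure (image2 ϕ u s) ⊆ c := by
  obtain ⟨u, hu, hmaps⟩ := hcs.exists_mem
  exact ⟨u, hu, closure_minimal (image2_subset_iff.2 hmaps) hc⟩

lemma isCompact_omegaLimit_of_isCompact_absorbing [TopologicalSpace β] [T2Space β] {s : Set α}
    {c : Set β} (hc : IsCompact c) (hcs : ∀ᶠ t in f, MapsTo (ϕ t) s c) :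
    IsCompact (omegaLimit f ϕ s) := by
  obtain ⟨u, hu, hsub⟩ := exists_closure_image2_subset_of_eventually_mapsTo f ϕ hc.isClosed hcs
  exact hc.of_isClosed_subset (isClosed_omegaLimit f ϕ s)
    ((omegaLimit_subset_closure_image2 f ϕ s hu).trans hsub)

lemma tendsto_infDist_omegaLimit_of_isCompact_absorbing [MetricSpace β] {x : α} {c : Set β}
    (hc : IsCompact c) (hcx : ∀ᶠ t in f, MapsTo (ϕ t) {x} c) :
    Tendsto (fun t => infDist (ϕ t x) (omegaLimit f ϕ {x})) f (𝓝 0) := by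
  rcases (omegaLimit f ϕ {x}).eq_empty_or_nonempty with hempty | hne
  · simp only [hempty, infDist_empty, tendsto_const_nhds]
  refine tendsto_order.2 ⟨fun a ha => .of_forall fun t => ha.trans_le infDist_nonneg,
    fun ε hε => ?_⟩
  filter_upwards [eventually_mapsTo_of_isCompact_absorbing_of_isOpen_of_omegaLimit_subset f ϕ {x}
    hc hcx isOpen_thickening (self_subset_thickening hε _)] with t ht
  exact (mem_thickening_iff_infDist_lt hne).1 (ht rfl)

lemma eq_of_mem_omegaLimit_of_tendsto [TopologicalSpace β] {V : β → ℝ} (hV : Continuous V)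
    {x : α} {c : ℝ} (hlim : Tendsto (fun t => V (ϕ t x)) f (𝓝 c)) {z : β}
    (hz : z ∈ omegaLimit f ϕ {x}) : V z = c := by
  rw [mem_omegaLimit_singleton_iff_mapClusterPt] at hz
  have hcl : ClusterPt (V z) (𝓝 c) := (hz.tendsto_comp (hV.tendsto z)).clusterPt.mono hlim
  by_contra hne
  exact hcl.neBot.ne (disjoint_nhds_nhds.2 hne).eq_bot

/-- LaSalle's invariance principle. -/
theorem Flow.omegaLimit_subset_setOf_eq_zero_of_hasDerivAt [TopologicalSpace β] (ϕ : Flow ℝ β)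
    {V V' : β → ℝ} (hV : Continuous V)
    (hderiv : ∀ x t, HasDerivAt (fun τ => V (ϕ τ x)) (V' (ϕ t x)) t) (hV' : ∀ y, V' y ≤ 0)
    {x : β} {c : Set β} (hc : IsCompact c) (hcx : ∀ t, 0 ≤ t → ϕ t x ∈ c) :
    omegaLimit atTop ϕ {x} ⊆ {z | V' z = 0} := by
  have hanti : Antitone fun t => V (ϕ t x) :=
    antitone_of_hasDerivAt_nonpos (hderiv x) fun t => hV' _
  obtain ⟨m, hm⟩ := hc.bddBelow_image hV.continuousOn
  have hrange : BddBelow (range fun t => V (ϕ t x)) :=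
    ⟨m, forall_mem_range.2 fun t =>
      (hm (mem_image_of_mem V (hcx _ (le_max_right t 0)))).trans (hanti (le_max_left t 0))⟩
  have hconst : ∀ z ∈ omegaLimit atTop ϕ {x}, V z = ⨅ t, V (ϕ t x) :=
    fun z => eq_of_mem_omegaLimit_of_tendsto _ _ hV (tendsto_atTop_ciInf hanti hrange)
  have hinv : IsInvariant ϕ (omegaLimit atTop ϕ {x}) :=
    ϕ.isInvariant_omegaLimit atTop {x} fun t => tendsto_atTop_add_const_left atTop t tendsto_id
  intro z hz
  have hflat : HasDerivAt (fun s => V (ϕ s z)) 0 0 := by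
    simp only [hconst _ (hinv _ hz)]
    exact hasDerivAt_const _ _
  simpa [ϕ.map_zero_apply] using (hderiv z 0).unique hflat

end OmegaLimit

theorem omegaLimit_compact_and_dist_to_inv_tendsto_zero_general
    {E : Type*} [NormedAddCommGroup E] [InnerProductSpace ℝ E]
    [FiniteDimensional ℝ E] {k : ℕ} (F : Fin (k + 1) → E → ℝ) (G : E → ℝ) (X : E → E)
    (hG : ContDiff ℝ 1 G)
    (hcons : ∀ y : E, ⟪gradient G y, X y⟫ = 0)
    (φ : ℝ → E → E)
    (hφ0 : ∀ x : E, φ 0 x = x)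
    (hφadd : ∀ (s t : ℝ) (x : E), φ (s + t) x = φ s (φ t x))
    (hφcont : Continuous fun p : ℝ × E => φ p.1 p.2)
    (hφderiv : ∀ (x : E) (t : ℝ),
      HasDerivAt (fun τ => φ τ x) (X (φ t x) - v0Field F G (φ t x)) t)
    (x₀ : E) (hbdd : Bornology.IsBounded {y : E | ∃ t : ℝ, 0 ≤ t ∧ φ t x₀ = y}) :
    ({z : E | ∃ t : ℕ → ℝ, StrictMono t ∧ Tendsto t atTop atTop ∧
        Tendsto (fun n => φ (t n) x₀) atTop (𝓝 z)}).Nonempty ∧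
    IsCompact {z : E | ∃ t : ℕ → ℝ, StrictMono t ∧ Tendsto t atTop atTop ∧
        Tendsto (fun n => φ (t n) x₀) atTop (𝓝 z)} ∧
    Tendsto (fun t : ℝ => Metric.infDist (φ t x₀) (invSet F G)) atTop (𝓝 0) := by
  let ϕ : Flow ℝ E := ⟨φ, hφcont, hφadd, hφ0⟩
  have hΩ : {z : E | ∃ t : ℕ → ℝ, StrictMono t ∧ Tendsto t atTop atTop ∧
      Tendsto (fun n => φ (t n) x₀) atTop (𝓝 z)} = omegaLimit atTop ϕ {x₀} := by
    ext z
    rw [mem_omegaLimit_singleton_iff_mapClusterPt]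
    exact exists_strictMono_tendsto_iff_mapClusterPt (γ := fun t => ϕ t x₀)
  set K := closure {y : E | ∃ t : ℝ, 0 ≤ t ∧ φ t x₀ = y}
  have hK : IsCompact K := hbdd.isCompact_closure
  have horbit : ∀ t, 0 ≤ t → φ t x₀ ∈ K := fun t ht => subset_closure ⟨t, ht, rfl⟩
  have hKabs : ∀ᶠ t in atTop, MapsTo (ϕ t) {x₀} K :=
    (eventually_ge_atTop 0).mono fun t ht y hy => hy ▸ horbit t ht
  have hInv : omegaLimit atTop ϕ {x₀} ⊆ invSet F G := fun z hz =>
    neg_eq_zero.1 <| ϕ.omegaLimit_subset_setOf_eq_zero_of_hasDerivAt hG.continuous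
      (fun x t => hasDerivAt_comp_of_hasDerivAt_sub_v0Field F G
        (hG.differentiable one_ne_zero) hcons (hφderiv x t))
      (fun y => neg_nonpos.2 (gramDetFG_nonneg F G y))
      hK horbit hz
  have hne : (omegaLimit atTop ϕ {x₀}).Nonempty :=
    nonempty_omegaLimit_of_isCompact_absorbing _ _ _ hK
      (exists_closure_image2_subset_of_eventually_mapsTo _ _ hK.isClosed hKabs)
      (singleton_nonempty x₀)
  rw [hΩ]
  refine ⟨hne, isCompact_omegaLimit_of_isCompact_absorbing _ _ hK hKabs, ?_⟩
  exact squeeze_zero (fun t => infDist_nonneg)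
    (fun t => infDist_le_infDist_of_subset hInv hne)
    (tendsto_infDist_omegaLimit_of_isCompact_absorbing _ ϕ hK hKabs)

/-- Theorem 3.2 (iii), ambient-metric version: for a (jointly continuous) flow
of the geometrically dissipated system with bounded forward orbit, the ω-limit set is nonempty
and compact, and the distance from the solution to `Inv` tends to `0` as `t → +∞`. -/
theorem omegaLimit_compact_and_dist_to_inv_tendsto_zero
    {E : Type*} [NormedAddCommGroup E] [InnerProductSpace ℝ E]
    [FiniteDimensional ℝ E] {k : ℕ} (F : Fin (k + 1) → E → ℝ) (G : E → ℝ) (X : E → E)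
    (hF : ∀ i, ContDiff ℝ 1 (F i)) (hG : ContDiff ℝ 1 G)
    (hcons : ∀ y : E, ⟪gradient G y, X y⟫ = 0)
    (φ : ℝ → E → E)
    (hφ0 : ∀ x : E, φ 0 x = x)
    (hφadd : ∀ (s t : ℝ) (x : E), φ (s + t) x = φ s (φ t x))
    (hφcont : Continuous fun p : ℝ × E => φ p.1 p.2)
    (hφderiv : ∀ (x : E) (t : ℝ),
      HasDerivAt (fun τ => φ τ x) (X (φ t x) - v0Field F G (φ t x)) t)
    (x₀ : E) (hbdd : Bornology.IsBounded {y : E | ∃ t : ℝ, 0 ≤ t ∧ φ t x₀ = y}) :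
    ({z : E | ∃ t : ℕ → ℝ, StrictMono t ∧ Tendsto t atTop atTop ∧
        Tendsto (fun n => φ (t n) x₀) atTop (𝓝 z)}).Nonempty ∧
    IsCompact {z : E | ∃ t : ℕ → ℝ, StrictMono t ∧ Tendsto t atTop atTop ∧
        Tendsto (fun n => φ (t n) x₀) atTop (𝓝 z)} ∧
    Tendsto (fun t : ℝ => Metric.infDist (φ t x₀) (invSet F G)) atTop (𝓝 0) :=
  omegaLimit_compact_and_dist_to_inv_tendsto_zero_general F G X hG hcons φ hφ0 hφadd hφcont hφderiv
    x₀ hbdd
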